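/- arXiv:2512.22788 — 2 statements merged into one kernel-verified Lean document; each statement's English description precedes it below -/
import Mathlib

section
/- The kernel of the natural surjection h^p : J^p_{a,X} → Pic^p_X satisfies ker(h^p)(K) = AJ^p(ker θ^p); consequently, h^p is an isogeny if and only if every incidentally trivial algebraically trivial cycle has a positive multiple that is Abel–Jacobi trivial (Griffiths's conjecture in codimension p). -/
/-- `ker(h^p)(K) = AJ^p(ker θ^p)`, and `h^p` is an isogeny iff
Griffiths's conjecture holds in codimension `p`.

Model (on `K`-points, `K` algebraically closed of characteristic zero):
`CH = CH^p_alg(X)`, `Jp = J^p_{a,X}(K)`, `Pp = Pic^p_X(K)`; `AJ` and `θ` are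
the surjective Abel–Jacobi and universal maps with `θ = h^p(K) ∘ AJ`
(`hcompat`), and `hp = h^p(K)` is surjective.  Since `K` is algebraically
closed of characteristic zero, `h^p` is an isogeny iff its kernel has finitely
many `K`-points; the characteristic-zero input "a subgroup scheme of an
abelian variety all of whose `K`-points are torsion is finite" is `hchar0`.
Griffiths's conjecture: every `z` with `θ z = 0` (incidentally trivial) has a
positive multiple that is Abel–Jacobi trivial. -/
theorem ker_hp_and_isogeny_iff_griffiths
    {CH Jp Pp : Type*} [AddCommGroup CH] [AddCommGroup Jp] [AddCommGroup Pp]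
    (AJ : CH →+ Jp) (θ : CH →+ Pp) (hp : Jp →+ Pp)
    (hAJsurj : Function.Surjective AJ)
    (hθsurj : Function.Surjective θ)
    (hpsurj : Function.Surjective hp)
    (hcompat : ∀ z, θ z = hp (AJ z))
    (hchar0 : (∀ x ∈ hp.ker, ∃ n : ℕ, 0 < n ∧ n • x = 0) →
        (hp.ker : Set Jp).Finite) :
    ((hp.ker : Set Jp) = AJ '' (θ.ker : Set CH)) ∧
    ((hp.ker : Set Jp).Finite ↔
      ∀ z : CH, θ z = 0 → ∃ n : ℕ, 0 < n ∧ AJ (n • z) = 0) := by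
  have hker : (hp.ker : Set Jp) = AJ '' (θ.ker : Set CH) := by
    ext x
    constructor
    · intro hx
      obtain ⟨z, rfl⟩ := hAJsurj x
      exact ⟨z, by simpa [AddMonoidHom.mem_ker, hcompat z] using hx, rfl⟩
    · rintro ⟨z, hz, rfl⟩
      have hz' : θ z = 0 := hz
      show hp (AJ z) = 0
      rw [← hcompat]; exact hz'
  refine ⟨hker, ?_, ?_⟩
  · intro hfin z hz
    have hmem : AJ z ∈ hp.ker := by
      simp [AddMonoidHom.mem_ker, ← hcompat, hz]
    -- the map k ↦ k • AJ z lands in the finite set, so not injective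
    have : ¬ Function.Injective (fun k : ℕ => k • AJ z) := by
      intro hinj
      have : Set.Finite (Set.range fun k : ℕ => k • AJ z) :=
        hfin.subset (by
          rintro _ ⟨k, rfl⟩
          exact AddSubgroup.nsmul_mem _ hmem k)
      exact Set.infinite_range_of_injective hinj this
    rw [Function.not_injective_iff] at this
    obtain ⟨a, b, hab, hne⟩ := this
    rcases Nat.lt_or_ge a b with h | h
    · refine ⟨b - a, by omega, ?_⟩
      rw [map_nsmul]
      have : (b - a) • AJ z + a • AJ z = a • AJ z := by
        rw [← add_nsmul]
        have : b - a + a = b := by omega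
        rw [this, hab]
      exact add_right_cancel (this.trans (zero_add _).symm)
    · have hlt : b < a := lt_of_le_of_ne h (by omega)
      refine ⟨a - b, by omega, ?_⟩
      rw [map_nsmul]
      have : (a - b) • AJ z + b • AJ z = b • AJ z := by
        rw [← add_nsmul]
        have : a - b + b = a := by omega
        rw [this, hab]
      exact add_right_cancel (this.trans (zero_add _).symm)
  · intro hgrif
    apply hchar0
    intro x hx
    obtain ⟨z, rfl⟩ := hAJsurj x
    have hz : θ z = 0 := by rw [hcompat]; exact hx
    obtain ⟨n, hn, hAJn⟩ := hgrif z hz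
    exact ⟨n, hn, by rw [← map_nsmul]; exact hAJn⟩
end

section
/- Assuming h^p and [k^p_X] are isogenies, the morphism f^p : Pic^p_X → J^p_{a,X} determined by AJ^p ∘ α^p_* = f^p ∘ θ₀ satisfies h^p ∘ f^p = [k^p_X] in End(Pic^p_X), and consequently f^p is an isogeny (in particular surjective) and its dual (f^p)^∨ is injective on ℂ-points. -/
/-- the morphism `f^p : Pic^p_X → J^p_{a,X}` satisfies
`h^p ∘ f^p = [k^p_X]`, is an isogeny, and has dual injective on `ℂ`-points.

Model (on `ℂ`-points of the complex abelian varieties involved):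
`CH0 = CH₀^alg(Pic^p_X)`, `CHp = CH^p_alg(X)`, `P = Pic^p_X(ℂ)`,
`J = J^p_{a,X}(ℂ)`, `Pd = Pic^{p,∨}_X(ℂ)`, `Jd = J^{p,∨}_{a,X}(ℂ)`.
`θ0` is the surjective Albanese map, `AJp` the Abel–Jacobi map, `θp` the
universal map with `θp = hp ∘ AJp` (`hcompat`), and `αs = α^p_*` the action of
a Poincaré `p`-cycle, so that `θp ∘ αs = [k] ∘ θ0` (`hPoincare`).  `fp` is the
morphism determined by `AJp ∘ αs = fp ∘ θ0` (`hfp`).  An isogeny of complex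
abelian varieties is, on points, a surjective homomorphism with finite kernel;
`hhp_isog` and `hk_isog` say that `h^p` and `[k^p_X]` are isogenies, `hJdiv`
records divisibility of the points of an abelian variety, and `hdual` the fact
that the dual of a surjection of abelian varieties is injective on points.
Conclusions: `h^p ∘ f^p = [k^p_X]`; `f^p` is an isogeny (in particular
surjective); `(f^p)^∨(ℂ)` is injective. -/
theorem fp_isogeny
    {CH0 CHp P J Pd Jd : Type*}
    [AddCommGroup CH0] [AddCommGroup CHp] [AddCommGroup P] [AddCommGroup J]
    [AddCommGroup Pd] [AddCommGroup Jd]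
    (θ0 : CH0 →+ P) (hθ0 : Function.Surjective θ0)
    (AJp : CHp →+ J) (θp : CHp →+ P) (hp : J →+ P)
    (αs : CH0 →+ CHp)
    (k : ℕ) (hk : 0 < k)
    (hcompat : ∀ z, θp z = hp (AJp z))
    (hPoincare : ∀ z, θp (αs z) = k • θ0 z)
    (fp : P →+ J) (hfp : ∀ z, AJp (αs z) = fp (θ0 z))
    (hhp_isog : Function.Surjective hp ∧ {x : J | hp x = 0}.Finite)
    (hk_isog : Function.Surjective (fun x : P => k • x) ∧
        {x : P | k • x = 0}.Finite)
    (hJdiv : ∀ n : ℕ, 0 < n → Function.Surjective (fun x : J => n • x))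
    (fpd : Jd →+ Pd)
    (hdual : Function.Surjective fp → Function.Injective fpd) :
    (∀ x : P, hp (fp x) = k • x) ∧
    Function.Surjective fp ∧ {x : P | fp x = 0}.Finite ∧
    Function.Injective fpd := by
  -- h^p ∘ f^p = [k] on points
  have hcomp : ∀ x : P, hp (fp x) = k • x := by
    intro x
    obtain ⟨z, rfl⟩ := hθ0 x
    rw [← hfp, ← hcompat, hPoincare]
  -- finiteness of ker f^p
  have hker : {x : P | fp x = 0}.Finite := by
    refine hk_isog.2.subset ?_
    intro x hx
    simp only [Set.mem_setOf_eq] at hx ⊢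
    rw [← hcomp, hx, map_zero]
  -- surjectivity of f^p
  have hsurj : Function.Surjective fp := by
    -- the kernel of h^p as a subgroup
    set K : AddSubgroup J := hp.ker with hK
    have hKfin : (K : Set J).Finite := hhp_isog.2
    set m : ℕ := Nat.card K with hm
    have hm0 : 0 < m := Nat.card_pos_iff.2 ⟨⟨⟨0, K.zero_mem⟩⟩, hKfin.to_subtype⟩
    have hKkill : ∀ y ∈ K, m • y = 0 := by
      intro y hy
      have hdvd : addOrderOf y ∣ m := K.addOrderOf_dvd_natCard hy
      exact addOrderOf_dvd_iff_nsmul_eq_zero.mp hdvd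
    intro y
    -- divide y by m
    obtain ⟨y', hy'⟩ := hJdiv m hm0 y
    -- find i in the image of f^p with hp i = hp y'
    obtain ⟨x, hx⟩ := hk_isog.1 (hp y')
    simp only at hx
    have hmem : y' - fp x ∈ K := by
      simp [hK, AddMonoidHom.mem_ker, map_sub, hcomp, hx]
    refine ⟨m • x, ?_⟩
    have := hKkill _ hmem
    rw [smul_sub] at this
    have : m • y' = m • fp x := by
      have h := sub_eq_zero.mp this
      exact h
    rw [map_nsmul, ← this]
    exact hy'
  exact ⟨hcomp, hsurj, hker, hdual hsurj⟩
end
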